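/- Assume the Continuum Hypothesis. Then for every real number a with 0 < a ≤ 1, the principle ♣^{inf≥a} is equivalent to the diamond principle ◊. -/

import Mathlib

open Filter Set

noncomputable def omega1 : Ordinal.{0} := (Cardinal.aleph 1).ord

/-- The set of countable limit ordinals, `Lim(ω₁)`. -/
def limOmega1 : Set Ordinal.{0} := {δ | δ < omega1 ∧ Order.IsSuccLimit δ}

/-- `C` is a closed unbounded subset of `ω₁`. -/
def IsClubIn (C : Set Ordinal.{0}) : Prop :=
  C ⊆ Set.Iio omega1 ∧
  (∀ δ, δ < omega1 → Order.IsSuccLimit δ → (∀ β < δ, ∃ γ ∈ C, β < γ ∧ γ < δ) → δ ∈ C) ∧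
  (∀ β, β < omega1 → ∃ γ ∈ C, β < γ)

/-- `S` is a stationary subset of `ω₁`. -/
def IsStatIn (S : Set Ordinal.{0}) : Prop :=
  S ⊆ Set.Iio omega1 ∧ ∀ C, IsClubIn C → (S ∩ C).Nonempty

open scoped Classical in
/-- `|{k < n : α k ∈ A}| / n` as a real number. -/
noncomputable def hitRatio (α : ℕ → Ordinal.{0}) (A : Set Ordinal.{0}) (n : ℕ) : ℝ :=
  ((Finset.range n).filter (fun k => α k ∈ A)).card / n

/-- `α` assigns to each `δ ∈ S` a strictly increasing sequence cofinal in `δ`. -/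
def GoodSeq (S : Set Ordinal.{0}) (α : Ordinal.{0} → ℕ → Ordinal.{0}) : Prop :=
  ∀ δ ∈ S, StrictMono (α δ) ∧ (∀ n, α δ n < δ) ∧ (∀ β < δ, ∃ n, β < α δ n)

/-- The principle `♣_S^{inf ≥ a}`. -/
def ClubSuitInf (S : Set Ordinal.{0}) (a : ℝ) : Prop :=
  ∃ α : Ordinal.{0} → ℕ → Ordinal.{0}, GoodSeq S α ∧
    ∀ A : Set Ordinal.{0}, A ⊆ Set.Iio omega1 → ¬ A.Countable →
      ∃ δ ∈ S, a ≤ Filter.liminf (hitRatio (α δ) A) Filter.atTop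

/-- The principle `♣_S^{sup ≥ a}`. -/
def ClubSuitSup (S : Set Ordinal.{0}) (a : ℝ) : Prop :=
  ∃ α : Ordinal.{0} → ℕ → Ordinal.{0}, GoodSeq S α ∧
    ∀ A : Set Ordinal.{0}, A ⊆ Set.Iio omega1 → ¬ A.Countable →
      ∃ δ ∈ S, a ≤ Filter.limsup (hitRatio (α δ) A) Filter.atTop

/-- The diamond principle `◊` on `ω₁`. -/
def DiamondOmega1 : Prop :=
  ∃ B : Ordinal.{0} → Set Ordinal.{0}, (∀ δ ∈ limOmega1, B δ ⊆ Set.Iio δ) ∧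
    ∀ A : Set Ordinal.{0}, A ⊆ Set.Iio omega1 →
      IsStatIn {δ ∈ limOmega1 | A ∩ Set.Iio δ = B δ}


/-! ◊ gives `♣^{inf ≥ a}` directly: at a δ where `B δ = A ∩ δ` and `A` is cofinal in δ, a ladder
chosen inside `B δ` lies entirely in `A`.

Conversely, under CH fix a list `W` of the countable subsets of ω₁ in which each set occurs
cofinally often. Given `A` and a club `C`, apply `♣^{inf ≥ a}` to an uncountable `A'` whose points
γ code (through `W γ`) initial segments `A ∩ s` of `A`, with `s` above the earlier points of `A'`
and separated from γ by a point of `C`. At the resulting δ ∈ C, the set `A ∩ δ` is densely coded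
along the ladder: for every β < δ, rungs of lower density at least `a` code initial segments of it
beyond β. For β large enough, distinct densely coded sets use disjoint sets of rungs, so there are
at most `1/a` of them. This gives countably many guesses at each δ, i.e. `◊⁻`, and `◊⁻` implies
◊. -/

open Ordinal Cardinal

theorem omega1_eq_omega_one : omega1 = ω₁ := ord_aleph 1

theorem isPrincipal_add_omega1 : IsPrincipal (· + ·) omega1 :=
  isPrincipal_add_ord (aleph0_le_aleph 1)

theorem isPrincipal_mul_omega1 : IsPrincipal (· * ·) omega1 :=
  isPrincipal_mul_ord (aleph0_le_aleph 1)

theorem omega0_lt_omega1 : ω < omega1 := omega1_eq_omega_one ▸ omega0_lt_omega_one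

theorem natCast_lt_omega1 (n : ℕ) : (n : Ordinal) < omega1 :=
  (natCast_lt_omega0 n).trans omega0_lt_omega1

theorem add_one_lt_omega1 {o : Ordinal} (h : o < omega1) : o + 1 < omega1 :=
  isPrincipal_add_omega1 h (by exact_mod_cast natCast_lt_omega1 1)

theorem iSup_lt_omega1 {ι : Type*} [Countable ι] {f : ι → Ordinal.{0}} (hf : ∀ i, f i < omega1) :
    ⨆ i, f i < omega1 :=
  omega1_eq_omega_one ▸ iSup_lt_omega_one (omega1_eq_omega_one ▸ hf)

theorem mk_Iio_omega1 : #(Iio omega1) = ℵ₁ := by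
  rw [Cardinal.mk_Iio_ordinal, omega1, card_ord, lift_aleph, Ordinal.lift_one]

theorem countable_Iio_of_lt_omega1 {o : Ordinal} (h : o < omega1) : (Iio o).Countable := by
  rw [← le_aleph0_iff_set_countable, Cardinal.mk_Iio_ordinal, lift_le_aleph0, card_le_iff,
    succ_aleph0]
  exact h

def IsCofinalBelow (D : Set Ordinal) (δ : Ordinal) : Prop :=
  ∀ β < δ, ∃ γ ∈ D, β < γ ∧ γ < δ

theorem not_countable_iff_isCofinalBelow_omega1 {A : Set Ordinal} (hA : A ⊆ Iio omega1) :
    ¬ A.Countable ↔ IsCofinalBelow A omega1 := by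
  constructor
  · intro hunc β hβ
    by_contra! hle
    refine hunc ((countable_Iio_of_lt_omega1 (add_one_lt_omega1 hβ)).mono fun γ hγ => ?_)
    exact Order.lt_add_one_iff.2 (not_lt.1 fun h => (hle γ hγ h).not_gt (hA hγ))
  · intro hcof hcount
    have := hcount.to_subtype
    obtain ⟨γ, hγA, hγ, -⟩ := hcof _ (iSup_lt_omega1 fun x : A => hA x.2)
    exact hγ.not_ge (Ordinal.le_iSup (fun x : A => x.1) ⟨γ, hγA⟩)

theorem exists_seq_of_forall_exists {α : Type*} {P : α → Prop} {R : ℕ → α → α → Prop} {x₀ : α}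
    (h₀ : P x₀) (h : ∀ n x, P x → ∃ y, P y ∧ R n x y) :
    ∃ u : ℕ → α, u 0 = x₀ ∧ ∀ n, P (u n) ∧ R n (u n) (u (n + 1)) := by
  choose f hfP hfR using h
  let v : ℕ → {x // P x} := fun n => Nat.rec ⟨x₀, h₀⟩ (fun n x => ⟨f n x x.2, hfP n x x.2⟩) n
  exact ⟨fun n => (v n).1, rfl, fun n => ⟨(v n).2, hfR n _ (v n).2⟩⟩

theorem exists_forall_le_lt_omega1 {g : Ordinal → Ordinal} (hg : ∀ x < omega1, g x < omega1)
    {x : Ordinal} (hx : x < omega1) : ∃ y < omega1, x < y ∧ ∀ x' ≤ x, g x' < y := by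
  have hx1 := add_one_lt_omega1 hx
  have := (countable_Iio_of_lt_omega1 hx1).to_subtype
  have hsup : ⨆ x' : Iio (x + 1), g x' < omega1 := iSup_lt_omega1 fun x' => hg _ (x'.2.trans hx1)
  refine ⟨(x ⊔ ⨆ x' : Iio (x + 1), g x') + 1, add_one_lt_omega1 (max_lt hx hsup),
    (le_max_left _ _).trans_lt (lt_add_one _), fun x' hx' => ?_⟩
  have := Ordinal.le_iSup (fun x' : Iio (x + 1) => g x') ⟨x', Order.lt_add_one_iff.2 hx'⟩
  exact (this.trans (le_max_right _ _)).trans_lt (lt_add_one _)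

theorem exists_closurePoint {g : Ordinal → Ordinal} (hg : ∀ x < omega1, g x < omega1)
    {β : Ordinal} (hβ : β < omega1) : ∃ δ ∈ limOmega1, β < δ ∧ ∀ x < δ, g x < δ := by
  obtain ⟨u, hu0, hu⟩ := exists_seq_of_forall_exists (P := (· < omega1))
    (R := fun _ x y => x < y ∧ ∀ x' ≤ x, g x' < y) hβ
    fun _ x hx => by obtain ⟨y, hy, h⟩ := exists_forall_le_lt_omega1 hg hx; exact ⟨y, hy, h⟩
  have hmono : StrictMono u := strictMono_nat_of_lt_succ fun n => (hu n).2.1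
  have hlt : ∀ n, u n < ⨆ m, u m :=
    fun n => (hmono n.lt_succ_self).trans_le (Ordinal.le_iSup u _)
  have hlim : Order.IsSuccLimit (⨆ n, u n) :=
    (isLUB_ciSup Ordinal.bddAbove_of_small).isSuccLimit_of_notMem (range_nonempty u)
      fun ⟨n, hn⟩ => (hlt n).ne hn
  refine ⟨⨆ n, u n, ⟨iSup_lt_omega1 fun n => (hu n).1, hlim⟩, hu0 ▸ hlt 0, fun x hx => ?_⟩
  obtain ⟨n, hn⟩ := Ordinal.lt_iSup_iff.1 hx
  exact ((hu n).2.2 x hn.le).trans (hlt (n + 1))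

def IsLadder (f : ℕ → Ordinal) (δ : Ordinal) : Prop :=
  StrictMono f ∧ (∀ n, f n < δ) ∧ ∀ β < δ, ∃ n, β < f n

theorem exists_isLadder {δ : Ordinal} (hδ : δ ∈ limOmega1) {D : Set Ordinal}
    (hD : IsCofinalBelow D δ) : ∃ f, IsLadder f δ ∧ ∀ n, f n ∈ D := by
  obtain ⟨e, he⟩ := (countable_Iio_of_lt_omega1 hδ.1).exists_eq_range ⟨0, hδ.2.bot_lt⟩
  have heδ : ∀ n, e n < δ := fun n => (he ▸ mem_range_self n : e n ∈ Iio δ)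
  obtain ⟨x₀, hx₀D, -, hx₀⟩ := hD 0 hδ.2.bot_lt
  obtain ⟨u, -, hu⟩ := exists_seq_of_forall_exists (P := fun x => x ∈ D ∧ x < δ)
    (R := fun n x y => max x (e n) < y) ⟨hx₀D, hx₀⟩ fun n x hx => by
      obtain ⟨y, hyD, hy, hyδ⟩ := hD _ (max_lt hx.2 (heδ n))
      exact ⟨y, ⟨hyD, hyδ⟩, hy⟩
  refine ⟨u, ⟨strictMono_nat_of_lt_succ fun n => (le_max_left _ _).trans_lt (hu n).2,
    fun n => (hu n).1.2, fun β hβ => ?_⟩, fun n => (hu n).1.1⟩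
  obtain ⟨n, rfl⟩ : β ∈ range e := he ▸ hβ
  exact ⟨n + 1, (le_max_right _ _).trans_lt (hu n).2⟩

theorem IsClubIn.mem_of_isCofinalBelow {C : Set Ordinal} (hC : IsClubIn C) {δ : Ordinal}
    (hδ : δ ∈ limOmega1) (h : IsCofinalBelow C δ) : δ ∈ C :=
  hC.2.1 δ hδ.1 hδ.2 h

theorem isClubIn_iInter {ι : Type*} [Countable ι] [Nonempty ι] {C : ι → Set Ordinal}
    (hC : ∀ i, IsClubIn (C i)) : IsClubIn (⋂ i, C i) := by
  refine ⟨(iInter_subset _ (Classical.arbitrary ι)).trans (hC _).1,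
    fun δ hδ hlim hcof => mem_iInter.2 fun i => (hC i).2.1 δ hδ hlim fun β hβ => ?_,
    fun β hβ => ?_⟩
  · obtain ⟨γ, hγ, h⟩ := hcof β hβ
    exact ⟨γ, mem_iInter.1 hγ i, h⟩
  · choose! c hcC hc using fun i => (hC i).2.2
    have hg : ∀ x < omega1, ⨆ i, c i x < omega1 :=
      fun x hx => iSup_lt_omega1 fun i => (hC i).1 (hcC i x hx)
    obtain ⟨δ, hδ, hβδ, hδg⟩ := exists_closurePoint hg hβ
    refine ⟨δ, mem_iInter.2 fun i => (hC i).mem_of_isCofinalBelow hδ fun x hx => ?_, hβδ⟩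
    have hx1 := hx.trans hδ.1
    exact ⟨c i x, hcC i x hx1, hc i x hx1,
      (Ordinal.le_iSup (fun i => c i x) i).trans_lt (hδg x hx)⟩

theorem IsClubIn.inter {C D : Set Ordinal} (hC : IsClubIn C) (hD : IsClubIn D) :
    IsClubIn (C ∩ D) := by
  rw [inter_eq_iInter]
  exact isClubIn_iInter (Bool.rec hD hC)

theorem isClubIn_setOf_isCofinalBelow {A : Set Ordinal} (hA : IsCofinalBelow A omega1) :
    IsClubIn {δ | δ ∈ limOmega1 ∧ IsCofinalBelow A δ} := by
  refine ⟨fun δ hδ => hδ.1.1, fun δ hδ hlim hcof => ⟨⟨hδ, hlim⟩, fun β hβ => ?_⟩,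
    fun β hβ => ?_⟩
  · obtain ⟨γ, hγ, hβγ, hγδ⟩ := hcof β hβ
    obtain ⟨x, hx, hβx, hxγ⟩ := hγ.2 β hβγ
    exact ⟨x, hx, hβx, hxγ.trans hγδ⟩
  · choose! g hgA hg using hA
    obtain ⟨δ, hδ, hβδ, hδg⟩ := exists_closurePoint (fun x hx => (hg x hx).2) hβ
    refine ⟨δ, ⟨hδ, fun x hx => ?_⟩, hβδ⟩
    have hx1 := hx.trans hδ.1
    exact ⟨g x, hgA x hx1, (hg x hx1).1, hδg x hx⟩

def omegaMulFixed : Set Ordinal := {δ | δ < omega1 ∧ ω * δ = δ}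

theorem isClubIn_omegaMulFixed : IsClubIn omegaMulFixed := by
  have key : ∀ δ, Order.IsSuccLimit δ → (∀ b < δ, ω * b < δ) → ω * δ = δ := fun δ hlim h =>
    le_antisymm ((mul_le_iff_of_isSuccLimit hlim).2 fun b hb => (h b hb).le)
      (le_mul_right δ omega0_pos)
  refine ⟨fun δ hδ => hδ.1, fun δ hδ hlim hcof => ⟨hδ, key δ hlim fun b hb => ?_⟩,
    fun β hβ => ?_⟩
  · obtain ⟨γ, hγ, hbγ, hγδ⟩ := hcof b hb
    calc ω * b < ω * γ := (mul_lt_mul_iff_right₀ omega0_pos).2 hbγ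
      _ = γ := hγ.2
      _ < δ := hγδ
  · obtain ⟨δ, hδ, hβδ, hδg⟩ := exists_closurePoint (g := (ω * ·))
      (fun x hx => isPrincipal_mul_omega1 omega0_lt_omega1 hx) hβ
    exact ⟨δ, ⟨hδ.1, key δ hδ.2 hδg⟩, hβδ⟩

section Density

open scoped Classical Topology

noncomputable def dens (s : Set ℕ) (n : ℕ) : ℝ :=
  ((Finset.range n).filter (· ∈ s)).card / n

noncomputable def lowerDensity (s : Set ℕ) : ℝ := liminf (dens s) atTop

theorem liminf_hitRatio (f : ℕ → Ordinal) (A : Set Ordinal) :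
    liminf (hitRatio f A) atTop = lowerDensity (f ⁻¹' A) := rfl

variable {s t : Set ℕ}

theorem dens_nonneg (s : Set ℕ) (n : ℕ) : 0 ≤ dens s n := by
  unfold dens; positivity

theorem dens_le_one (s : Set ℕ) (n : ℕ) : dens s n ≤ 1 :=
  div_le_one_of_le₀ (by exact_mod_cast (Finset.card_filter_le _ _).trans (Finset.card_range n).le)
    n.cast_nonneg

theorem dens_mono (h : s ⊆ t) (n : ℕ) : dens s n ≤ dens t n := by
  unfold dens
  gcongr

theorem dens_union (h : Disjoint s t) : dens (s ∪ t) = dens s + dens t := by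
  ext n
  have hdisj : Disjoint ((Finset.range n).filter (· ∈ s)) ((Finset.range n).filter (· ∈ t)) :=
    Finset.disjoint_filter.2 fun k _ hs ht => h.ne_of_mem hs ht rfl
  simp only [dens, Pi.add_apply, ← add_div]
  rw [← Nat.cast_add, ← Finset.card_union_of_disjoint hdisj]
  congr 3
  ext k
  simp [and_or_left]

theorem tendsto_dens_of_finite (hs : s.Finite) : Tendsto (dens s) atTop (𝓝 0) := by
  refine squeeze_zero (dens_nonneg s) (fun n => ?_)
    (tendsto_const_div_atTop_nhds_zero_nat (hs.toFinset.card : ℝ))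
  unfold dens
  gcongr
  exact fun k hk => hs.mem_toFinset.2 (Finset.mem_filter.1 hk).2

theorem isBoundedUnder_ge_dens (s : Set ℕ) : IsBoundedUnder (· ≥ ·) atTop (dens s) :=
  isBoundedUnder_of ⟨0, dens_nonneg s⟩

theorem isBoundedUnder_le_dens (s : Set ℕ) : IsBoundedUnder (· ≤ ·) atTop (dens s) :=
  isBoundedUnder_of ⟨1, dens_le_one s⟩

theorem isCoboundedUnder_ge_dens (s : Set ℕ) : IsCoboundedUnder (· ≥ ·) atTop (dens s) :=
  (isBoundedUnder_le_dens s).isCoboundedUnder_ge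

theorem lowerDensity_nonneg (s : Set ℕ) : 0 ≤ lowerDensity s :=
  le_liminf_of_le (isCoboundedUnder_ge_dens s) (Eventually.of_forall (dens_nonneg s))

theorem lowerDensity_mono (h : s ⊆ t) : lowerDensity s ≤ lowerDensity t :=
  liminf_le_liminf (Eventually.of_forall (dens_mono h)) (isBoundedUnder_ge_dens s)
    (isCoboundedUnder_ge_dens t)

theorem lowerDensity_univ : lowerDensity univ = 1 := by
  refine (tendsto_const_nhds.congr' ?_).liminf_eq
  filter_upwards [eventually_ne_atTop 0] with n hn
  simp [dens, hn]

theorem lowerDensity_le_one (s : Set ℕ) : lowerDensity s ≤ 1 :=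
  lowerDensity_univ ▸ lowerDensity_mono (subset_univ s)

theorem add_lowerDensity_le (h : Disjoint s t) :
    lowerDensity s + lowerDensity t ≤ lowerDensity (s ∪ t) := by
  unfold lowerDensity
  rw [dens_union h]
  exact le_liminf_add (isBoundedUnder_ge_dens s) (isBoundedUnder_le_dens s)
    (isBoundedUnder_ge_dens t) (isCoboundedUnder_ge_dens t)

theorem sum_lowerDensity_le_one {ι : Type*} {u : ι → Set ℕ} (T : Finset ι)
    (hT : (T : Set ι).PairwiseDisjoint u) : ∑ i ∈ T, lowerDensity (u i) ≤ 1 := by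
  classical
  suffices ∑ i ∈ T, lowerDensity (u i) ≤ lowerDensity (⋃ i ∈ T, u i) from
    this.trans (lowerDensity_le_one _)
  induction T using Finset.induction_on with
  | empty => simpa using lowerDensity_nonneg _
  | insert i T hi ih =>
    rw [Finset.sum_insert hi, Finset.set_biUnion_insert]
    have hdisj : Disjoint (u i) (⋃ j ∈ T, u j) := disjoint_iUnion₂_right.2 fun j hj =>
      hT (Finset.mem_insert_self i T) (Finset.mem_insert_of_mem hj)
        (ne_of_mem_of_not_mem hj hi).symm
    exact (add_le_add le_rfl (ih (hT.subset (by simp)))).trans (add_lowerDensity_le hdisj)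

theorem lowerDensity_le_of_finite_diff (h : (s \ t).Finite) : lowerDensity s ≤ lowerDensity t :=
  calc lowerDensity s ≤ lowerDensity ((s \ t) ∪ t) := lowerDensity_mono (subset_sdiff_union s t)
    _ = liminf (dens (s \ t) + dens t) atTop := by rw [lowerDensity, dens_union disjoint_sdiff_left]
    _ ≤ limsup (dens (s \ t)) atTop + lowerDensity t :=
      liminf_add_le (isBoundedUnder_ge_dens _) (isBoundedUnder_le_dens _)
        (isBoundedUnder_ge_dens t) (isCoboundedUnder_ge_dens t)
    _ = lowerDensity t := by rw [(tendsto_dens_of_finite h).limsup_eq, zero_add]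

theorem infinite_of_pos_lowerDensity (h : 0 < lowerDensity s) : s.Infinite :=
  fun hs => h.ne' (tendsto_dens_of_finite hs).liminf_eq

end Density

noncomputable def tag (i : ℕ) (ξ : Ordinal) : Ordinal := ω * ξ + i

theorem tag_inj {i j : ℕ} {ξ η : Ordinal} : tag i ξ = tag j η ↔ i = j ∧ ξ = η := by
  have hdiv : ∀ (k : ℕ) x, tag k x / ω = x := fun k x => by
    rw [tag, mul_add_div _ omega0_ne_zero, div_eq_zero_of_lt (natCast_lt_omega0 k), add_zero]
  have hmod : ∀ (k : ℕ) x, tag k x % ω = k := fun k x => by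
    rw [tag, mul_add_mod_self, mod_eq_of_lt (natCast_lt_omega0 k)]
  refine ⟨fun h => ⟨?_, (hdiv i ξ).symm.trans (h ▸ hdiv j η)⟩, fun ⟨hij, hξη⟩ => hij ▸ hξη ▸ rfl⟩
  exact_mod_cast (hmod i ξ).symm.trans (h ▸ hmod j η)

theorem tag_lt_omega1 (i : ℕ) {ξ : Ordinal} (h : ξ < omega1) : tag i ξ < omega1 :=
  isPrincipal_add_omega1 (isPrincipal_mul_omega1 omega0_lt_omega1 h) (natCast_lt_omega1 i)

theorem preimage_tag_Iio {δ : Ordinal} (hδ : ω * δ = δ) (i : ℕ) : tag i ⁻¹' Iio δ = Iio δ := by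
  ext ξ
  refine ⟨fun h => ((le_mul_right ξ omega0_pos).trans le_self_add).trans_lt h, fun h => ?_⟩
  calc tag i ξ < ω * ξ + ω := add_lt_add_right (natCast_lt_omega0 i) _
    _ = ω * Order.succ ξ := (mul_succ _ _).symm
    _ ≤ ω * δ := mul_le_mul_right (Order.succ_le_of_lt h) _
    _ = δ := hδ

theorem preimage_tag_iUnion_image (A : ℕ → Set Ordinal) (i : ℕ) :
    tag i ⁻¹' ⋃ j, tag j '' A j = A i := by
  ext ξ
  simp [tag_inj]

noncomputable def codePair (s : Ordinal) (X : Set Ordinal) : Set Ordinal :=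
  insert (tag 1 s) (tag 0 '' X)

theorem preimage_tag_zero_codePair (s : Ordinal) (X : Set Ordinal) :
    tag 0 ⁻¹' codePair s X = X := by
  ext ξ
  simp [codePair, tag_inj]

theorem preimage_tag_one_codePair (s : Ordinal) (X : Set Ordinal) :
    tag 1 ⁻¹' codePair s X = {s} := by
  ext ξ
  simp [codePair, tag_inj]

theorem codePair_inj {s s' : Ordinal} {X X' : Set Ordinal} :
    codePair s X = codePair s' X' ↔ s = s' ∧ X = X' := by
  refine ⟨fun h => ⟨singleton_injective ?_, ?_⟩, fun ⟨hs, hX⟩ => hs ▸ hX ▸ rfl⟩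
  · rw [← preimage_tag_one_codePair s X, h, preimage_tag_one_codePair]
  · rw [← preimage_tag_zero_codePair s X, h, preimage_tag_zero_codePair]

theorem codePair_countable (s : Ordinal) {X : Set Ordinal} (hX : X.Countable) :
    (codePair s X).Countable :=
  (hX.image _).insert _

theorem codePair_subset_Iio_omega1 {s : Ordinal} {X : Set Ordinal} (hs : s < omega1)
    (hX : X ⊆ Iio omega1) : codePair s X ⊆ Iio omega1 :=
  insert_subset_iff.2 ⟨tag_lt_omega1 1 hs, image_subset_iff.2 fun _ hξ => tag_lt_omega1 0 (hX hξ)⟩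

theorem clubSuitInf_of_diamondOmega1 {a : ℝ} (ha : a ≤ 1) (hD : DiamondOmega1) :
    ClubSuitInf limOmega1 a := by
  obtain ⟨B, -, hB⟩ := hD
  have hladder : ∀ δ ∈ limOmega1,
      ∃ f, IsLadder f δ ∧ (IsCofinalBelow (B δ) δ → ∀ n, f n ∈ B δ) := by
    intro δ hδ
    by_cases h : IsCofinalBelow (B δ) δ
    · obtain ⟨f, hf, hfB⟩ := exists_isLadder hδ h
      exact ⟨f, hf, fun _ => hfB⟩
    · obtain ⟨f, hf, -⟩ := exists_isLadder hδ (D := Iio δ)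
        fun β hβ => ⟨β + 1, hδ.2.add_one_lt hβ, lt_add_one β, hδ.2.add_one_lt hβ⟩
      exact ⟨f, hf, fun h' => (h h').elim⟩
  choose! α hα hαB using hladder
  refine ⟨α, hα, fun A hA hunc => ?_⟩
  have hAcof := (not_countable_iff_isCofinalBelow_omega1 hA).1 hunc
  obtain ⟨δ, ⟨hδ, hAB⟩, -, hcof⟩ := (hB A hA).2 _ (isClubIn_setOf_isCofinalBelow hAcof)
  have hBcof : IsCofinalBelow (B δ) δ := fun β hβ => by
    obtain ⟨γ, hγA, hβγ, hγδ⟩ := hcof β hβ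
    exact ⟨γ, hAB ▸ ⟨hγA, hγδ⟩, hβγ, hγδ⟩
  have hall : α δ ⁻¹' A = Set.univ :=
    eq_univ_of_forall fun n => (hAB ▸ hαB δ hδ hBcof n : α δ n ∈ A ∩ Iio δ).1
  exact ⟨δ, hδ, by rwa [liminf_hitRatio, hall, lowerDensity_univ]⟩

-- Kunen's `◊⁻ → ◊`: countably many candidate sequences are coded into one set, which diagonalizes
-- against all of them at once.
theorem diamondOmega1_of_countable_guesses (G : Ordinal → Set (Set Ordinal))
    (hG : ∀ δ ∈ limOmega1, (G δ).Countable)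
    (hguess : ∀ A ⊆ Iio omega1, ∀ C, IsClubIn C → ∃ δ ∈ limOmega1, δ ∈ C ∧ A ∩ Iio δ ∈ G δ) :
    DiamondOmega1 := by
  choose! e he using fun δ hδ => countable_iff_exists_subset_range.1 (hG δ hδ)
  let B (i : ℕ) (δ : Ordinal) : Set Ordinal := tag i ⁻¹' e δ i ∩ Iio δ
  by_contra hnd
  have hbad : ∀ i, ∃ A ⊆ Iio omega1, ∃ C, IsClubIn C ∧
      ∀ δ ∈ limOmega1, δ ∈ C → A ∩ Iio δ ≠ B i δ := by
    intro i
    by_contra! h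
    refine hnd ⟨B i, fun δ _ => inter_subset_right, fun A hA =>
      ⟨fun δ hδ => hδ.1.1, fun C hC => ?_⟩⟩
    obtain ⟨δ, hδ, hδC, hAδ⟩ := h A hA C hC
    exact ⟨δ, ⟨hδ, hAδ⟩, hδC⟩
  choose A hA C hC hAC using hbad
  have hX : ⋃ i, tag i '' A i ⊆ Iio omega1 :=
    iUnion_subset fun i => image_subset_iff.2 fun _ hξ => tag_lt_omega1 i (hA i hξ)
  obtain ⟨δ, hδ, hδC, hXδ⟩ :=
    hguess _ hX _ (isClubIn_iInter fun i => isClubIn_omegaMulFixed.inter (hC i))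
  obtain ⟨i, hi⟩ := he δ hδ hXδ
  have hfix : ω * δ = δ := (mem_iInter.1 hδC 0).1.2
  refine hAC i δ hδ (mem_iInter.1 hδC i).2 ?_
  show A i ∩ Iio δ = tag i ⁻¹' e δ i ∩ Iio δ
  rw [hi, preimage_inter, preimage_tag_iUnion_image, preimage_tag_Iio hfix, inter_assoc,
    inter_self]

theorem two_power_aleph0_eq_aleph_one_univ (CH : (2 : Cardinal.{u}) ^ ℵ₀ = ℵ₁) :
    (2 : Cardinal.{v}) ^ ℵ₀ = ℵ₁ := by
  rw [two_power_aleph0] at CH ⊢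
  rw [← lift_eq_aleph_one.{v, u}, lift_continuum, ← lift_continuum.{v, u}, lift_eq_aleph_one, CH]

theorem exists_cofinal_enumeration (CH : (2 : Cardinal.{u}) ^ ℵ₀ = ℵ₁) :
    ∃ W : Ordinal → Set Ordinal,
      ∀ X ⊆ Iio omega1, X.Countable → IsCofinalBelow {γ | W γ = X} omega1 := by
  let T := {X : Set Ordinal // X ⊆ Iio omega1 ∧ #X ≤ ℵ₀}
  have hT : #T ≤ ℵ₁ := (mk_bounded_subset_le _ _).trans_eq <| by
    rw [mk_Iio_omega1, max_eq_left (aleph0_le_aleph 1), ← two_power_aleph0_eq_aleph_one_univ CH,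
      ← power_mul, aleph0_mul_aleph0]
  have hTω : #(T × Iio omega1) ≤ #(Iio omega1) := by
    rw [mk_prod, Cardinal.lift_id, Cardinal.lift_id, mk_Iio_omega1]
    exact (mul_le_mul_left hT _).trans (mul_eq_self (aleph0_le_aleph 1)).le
  obtain ⟨j⟩ := hTω
  let g : T × Iio omega1 → Ordinal := fun p => j p
  have hg : g.Injective := Subtype.val_injective.comp j.injective
  have : Nonempty (T × Iio omega1) :=
    ⟨(⟨∅, empty_subset _, by simp⟩, ⟨0, omega0_pos.trans omega0_lt_omega1⟩)⟩
  refine ⟨fun γ => (Function.invFun g γ).1.1, fun X hX hXc => ?_⟩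
  let x : T := ⟨X, hX, le_aleph0_iff_set_countable.2 hXc⟩
  have hsub : range (g ∘ Prod.mk x) ⊆ {γ | (Function.invFun g γ).1.1 = X} := by
    rintro _ ⟨η, rfl⟩
    simp only [mem_ofPred_eq, Function.comp_apply, Function.leftInverse_invFun hg (x, η), x]
  have hunc : ¬ (range (g ∘ Prod.mk x)).Countable := by
    rw [← le_aleph0_iff_set_countable, mk_range_eq _ (hg.comp (Prod.mk_right_injective x)),
      mk_Iio_omega1]
    exact not_le.2 aleph0_lt_aleph_one
  intro β hβ
  obtain ⟨γ, hγ, hβγ, hγω⟩ := (not_countable_iff_isCofinalBelow_omega1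
    (range_subset_iff.2 fun η => (j (x, η)).2)).1 hunc β hβ
  exact ⟨γ, hsub hγ, hβγ, hγω⟩

section Coding

variable (W : Ordinal → Set Ordinal) (f : ℕ → Ordinal) (δ : Ordinal)

def codingIndices (L : Set Ordinal) (β : Ordinal) : Set ℕ :=
  {n | ∃ s, β < s ∧ s < δ ∧ W (f n) = codePair s (L ∩ Iio s)}

def DenselyCoded (a : ℝ) (L : Set Ordinal) : Prop :=
  L ⊆ Iio δ ∧ ∀ β < δ, a ≤ lowerDensity (codingIndices W f δ L β)

theorem disjoint_codingIndices {L L' : Set Ordinal} {x β : Ordinal} (hx : ¬ (x ∈ L ↔ x ∈ L'))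
    (hxβ : x ≤ β) : Disjoint (codingIndices W f δ L β) (codingIndices W f δ L' β) := by
  refine disjoint_left.2 fun n ⟨s, hβs, _, hs⟩ ⟨s', _, _, hs'⟩ => hx ?_
  obtain ⟨rfl, heq⟩ := codePair_inj.1 (hs.symm.trans hs')
  have hxs : x ∈ Iio s := hxβ.trans_lt hβs
  simpa [hxs] using congrArg (x ∈ ·) heq

variable {W f δ}

theorem card_mul_le_one_of_denselyCoded {a : ℝ} (hδ : 0 < δ) (T : Finset (Set Ordinal))
    (hT : ∀ L ∈ T, DenselyCoded W f δ a L) : T.card * a ≤ 1 := by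
  have hsep : ∀ p ∈ T.offDiag, ∃ x < δ, ¬ (x ∈ p.1 ↔ x ∈ p.2) := by
    rintro ⟨L, L'⟩ hp
    obtain ⟨hL, hL', hne⟩ := Finset.mem_offDiag.1 hp
    obtain ⟨x, hx⟩ : ∃ x, ¬ (x ∈ L ↔ x ∈ L') := by
      by_contra! h
      exact hne (ext h)
    rcases (by tauto : x ∈ L ∨ x ∈ L') with h | h
    exacts [⟨x, (hT L hL).1 h, hx⟩, ⟨x, (hT L' hL').1 h, hx⟩]
  choose! d hdδ hd using hsep
  have hβ : T.offDiag.sup d < δ := (Finset.sup_lt_iff hδ).2 hdδ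
  have hdisj : (T : Set (Set Ordinal)).PairwiseDisjoint (codingIndices W f δ · (T.offDiag.sup d)) :=
    fun L hL L' hL' hne => by
      have hp : (L, L') ∈ T.offDiag := Finset.mem_offDiag.2 ⟨hL, hL', hne⟩
      exact disjoint_codingIndices W f δ (hd _ hp) (Finset.le_sup hp)
  calc T.card * a = ∑ _ ∈ T, a := by simp
    _ ≤ ∑ L ∈ T, lowerDensity (codingIndices W f δ L (T.offDiag.sup d)) :=
      Finset.sum_le_sum fun L hL => (hT L hL).2 _ hβ
    _ ≤ 1 := sum_lowerDensity_le_one T hdisj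

theorem finite_setOf_denselyCoded {a : ℝ} (ha : 0 < a) (hδ : 0 < δ) :
    {L | DenselyCoded W f δ a L}.Finite := by
  by_contra hinf
  obtain ⟨n, hn⟩ := exists_nat_gt a⁻¹
  obtain ⟨T, hTsub, rfl⟩ := Set.Infinite.exists_subset_card_eq hinf n
  have := card_mul_le_one_of_denselyCoded hδ T fun L hL => hTsub hL
  rw [inv_lt_iff_one_lt_mul₀ ha] at hn
  linarith

end Coding

-- Taking `A'` to be the values of a coding function `g` at its closure points makes the
-- elements of `A'` code ever longer initial segments of `A`, without a transfinite recursion.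
theorem exists_coding_set {W : Ordinal → Set Ordinal}
    (hW : ∀ X ⊆ Iio omega1, X.Countable → IsCofinalBelow {γ | W γ = X} omega1)
    (A : Set Ordinal) {C : Set Ordinal} (hC : IsClubIn C) :
    ∃ A' ⊆ Iio omega1, IsCofinalBelow A' omega1 ∧ ∃ s : Ordinal → Ordinal, ∀ γ ∈ A',
      W γ = codePair (s γ) (A ∩ Iio (s γ)) ∧ (∃ c ∈ C, s γ < c ∧ c < γ) ∧
        ∀ γ' ∈ A', γ' < γ → γ' < s γ := by
  have hpick : ∀ e < omega1, ∃ γ < omega1,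
      W γ = codePair e (A ∩ Iio e) ∧ ∃ c ∈ C, e < c ∧ c < γ := by
    intro e he
    obtain ⟨c, hcC, hec⟩ := hC.2.2 e he
    have hX : codePair e (A ∩ Iio e) ⊆ Iio omega1 :=
      codePair_subset_Iio_omega1 he (inter_subset_right.trans (Iio_subset_Iio he.le))
    obtain ⟨γ, hγ, hcγ, hγω⟩ :=
      hW _ hX (codePair_countable e ((countable_Iio_of_lt_omega1 he).mono inter_subset_right))
        c (hC.1 hcC)
    exact ⟨γ, hγω, hγ, c, hcC, hec, hcγ⟩
  choose! g hgω hgW hgC using hpick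
  have hlt_g : ∀ e < omega1, e < g e := fun e he =>
    have ⟨_, _, hec, hcg⟩ := hgC e he
    hec.trans hcg
  let E := {e | e < omega1 ∧ ∀ x < e, g x < e}
  have hmono : ∀ e ∈ E, ∀ e' ∈ E, g e' < g e → e' < e := fun e he e' he' hlt => by
    by_contra! hle
    rcases hle.lt_or_eq with h | rfl
    · exact (he'.2 e h).trans (hlt_g e' he'.1) |>.not_gt hlt
    · exact hlt.false
  choose! s hsE hs using fun γ (hγ : γ ∈ g '' E) => hγ
  refine ⟨g '' E, image_subset_iff.2 fun e he => hgω e he.1, fun β hβ => ?_, s, fun γ hγ => ?_⟩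
  · obtain ⟨e, he, hβe, hclosed⟩ := exists_closurePoint hgω hβ
    exact ⟨g e, mem_image_of_mem g ⟨he.1, hclosed⟩, hβe.trans (hlt_g e he.1), hgω e he.1⟩
  · obtain ⟨he, hgs⟩ : s γ ∈ E ∧ g (s γ) = γ := ⟨hsE γ hγ, hs γ hγ⟩
    generalize s γ = e at he hgs ⊢
    subst hgs
    refine ⟨hgW e he.1, hgC e he.1, fun γ' hγ' hlt => ?_⟩
    rw [← hs γ' hγ'] at hlt ⊢
    exact he.2 _ (hmono e he _ (hsE γ' hγ') hlt)

theorem exists_denselyCoded_of_clubSuitInf {W : Ordinal → Set Ordinal}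
    (hW : ∀ X ⊆ Iio omega1, X.Countable → IsCofinalBelow {γ | W γ = X} omega1)
    {α : Ordinal → ℕ → Ordinal} (hα : GoodSeq limOmega1 α) {a : ℝ} (ha : 0 < a)
    (hcs : ∀ A : Set Ordinal, A ⊆ Iio omega1 → ¬ A.Countable →
      ∃ δ ∈ limOmega1, a ≤ liminf (hitRatio (α δ) A) atTop)
    (A : Set Ordinal) {C : Set Ordinal} (hC : IsClubIn C) :
    ∃ δ ∈ limOmega1, δ ∈ C ∧ DenselyCoded W (α δ) δ a (A ∩ Iio δ) := by
  obtain ⟨A', hA'ω, hA'cof, s, hs⟩ := exists_coding_set hW A hC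
  have hs_lt : ∀ γ ∈ A', s γ < γ := fun γ hγ =>
    have ⟨_, _, hsc, hcγ⟩ := (hs γ hγ).2.1
    hsc.trans hcγ
  obtain ⟨δ, hδ, hdens⟩ :=
    hcs A' hA'ω ((not_countable_iff_isCofinalBelow_omega1 hA'ω).2 hA'cof)
  rw [liminf_hitRatio] at hdens
  obtain ⟨hmono, hlt, hcof⟩ := hα δ hδ
  have hN : (α δ ⁻¹' A').Infinite := infinite_of_pos_lowerDensity (ha.trans_le hdens)
  have hhit : ∀ β < δ, ∃ n, α δ n ∈ A' ∧ β < α δ n := fun β hβ => by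
    obtain ⟨m, hm⟩ := hcof β hβ
    obtain ⟨n, hn, hmn⟩ := hN.exists_gt m
    exact ⟨n, hn, hm.trans (hmono hmn)⟩
  have hlater : ∀ n₀ n, α δ n₀ ∈ A' → α δ n ∈ A' → n₀ < n → α δ n₀ < s (α δ n) :=
    fun _ _ h₀ h hlt => (hs _ h).2.2 _ h₀ (hmono hlt)
  have hδC : δ ∈ C := hC.mem_of_isCofinalBelow hδ fun β hβ => by
    obtain ⟨n₀, h₀, hβn₀⟩ := hhit β hβ
    obtain ⟨n, hn, hn₀n⟩ := hN.exists_gt n₀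
    obtain ⟨c, hcC, hsc, hcγ⟩ := (hs _ hn).2.1
    exact ⟨c, hcC, hβn₀.trans ((hlater n₀ n h₀ hn hn₀n).trans hsc), hcγ.trans (hlt n)⟩
  refine ⟨δ, hδ, hδC, inter_subset_right, fun β hβ => ?_⟩
  obtain ⟨n₀, h₀, hβn₀⟩ := hhit β hβ
  refine hdens.trans (lowerDensity_le_of_finite_diff
    ((finite_Iic n₀).subset fun n ⟨hn, hnc⟩ => mem_Iic.2 (not_lt.1 fun hn₀n => hnc ?_)))
  have hsδ : s (α δ n) < δ := (hs_lt _ hn).trans (hlt n)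
  refine ⟨s (α δ n), hβn₀.trans (hlater n₀ n h₀ hn hn₀n), hsδ, ?_⟩
  rw [(hs _ hn).1, inter_assoc, Iio_inter_Iio, min_eq_right hsδ.le]

theorem diamondOmega1_of_clubSuitInf (CH : (2 : Cardinal.{u}) ^ ℵ₀ = ℵ₁) {a : ℝ} (ha : 0 < a)
    (h : ClubSuitInf limOmega1 a) : DiamondOmega1 := by
  obtain ⟨W, hW⟩ := exists_cofinal_enumeration CH
  obtain ⟨α, hα, hcs⟩ := h
  exact diamondOmega1_of_countable_guesses (fun δ => {L | DenselyCoded W (α δ) δ a L})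
    (fun δ hδ => (finite_setOf_denselyCoded ha hδ.2.bot_lt).countable)
    fun A _ C hC => exists_denselyCoded_of_clubSuitInf hW hα ha hcs A hC

/-- Assume CH. Then for every `a ∈ (0,1]`, `♣^{inf ≥ a}` is equivalent to `◊`. -/
theorem clubSuitInf_iff_diamond
    (CH : (2 : Cardinal) ^ Cardinal.aleph0 = Cardinal.aleph 1)
    (a : ℝ) (ha0 : 0 < a) (ha1 : a ≤ 1) :
    ClubSuitInf limOmega1 a ↔ DiamondOmega1 :=
  ⟨diamondOmega1_of_clubSuitInf CH ha0, clubSuitInf_of_diamondOmega1 ha1⟩
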